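/- arXiv:2605.24364 — 2 statements merged into one kernel-verified Lean document; each statement's English description precedes it below -/
import Mathlib

section
/- Suppose Δ_b - Δ_{b+1} ≥ (κ²/(4c_L))‖g_b‖_*² and Δ_b ≤ R‖g_b‖_* for all b, with Δ_b ≥ 0, κ ∈ (0,1], c_L, R > 0. Then Δ_B ≤ 4c_L R²/(κ² B) for all B ≥ 1. -/
/-!
With `D = 4 c_L R² / κ²`, the two hypotheses combine into `Δ_b² ≤ D (Δ_b - Δ_{b+1})`.
Then `Δ` is nonincreasing, and as long as it stays positive its reciprocal grows by at least
`1/D` per step: `1/Δ_{b+1} - 1/Δ_b = (Δ_b - Δ_{b+1}) / (Δ_b Δ_{b+1}) ≥ Δ_b / (D Δ_{b+1}) ≥ 1/D`.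
Hence `1/Δ_B ≥ B/D`.
-/

lemma sq_le_div_mul_of_le_mul {x g R c d : ℝ} (hc : 0 < c) (hx : 0 ≤ x) (hxg : x ≤ R * g)
    (hgd : c * g ^ 2 ≤ d) : x ^ 2 ≤ R ^ 2 / c * d :=
  calc x ^ 2 ≤ (R * g) ^ 2 := pow_le_pow_left₀ hx hxg 2
    _ = R ^ 2 / c * (c * g ^ 2) := by field_simp
    _ ≤ R ^ 2 / c * d := by gcongr

section SquareDescent

variable {a : ℕ → ℝ} {D : ℝ}

lemma succ_le_of_sq_le_mul_sub (hD : 0 < D) {b : ℕ} (h : a b ^ 2 ≤ D * (a b - a (b + 1))) :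
    a (b + 1) ≤ a b :=
  sub_nonneg.1 <| nonneg_of_mul_nonneg_right ((sq_nonneg _).trans h) hD

lemma inv_add_inv_le_inv_succ (hD : 0 < D) {b : ℕ} (hpos : 0 < a (b + 1))
    (h : a b ^ 2 ≤ D * (a b - a (b + 1))) : (a b)⁻¹ + D⁻¹ ≤ (a (b + 1))⁻¹ := by
  have hmono := succ_le_of_sq_le_mul_sub hD h
  have hb : 0 < a b := hpos.trans_le hmono
  rw [inv_add_inv hb.ne' hD.ne', div_le_iff₀ (by positivity), inv_mul_eq_div,
    le_div_iff₀ hpos]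
  nlinarith

lemma natCast_div_le_inv_of_sq_le_mul_sub (hD : 0 < D)
    (h : ∀ b, a b ^ 2 ≤ D * (a b - a (b + 1))) : ∀ B : ℕ, 0 < a B → B / D ≤ (a B)⁻¹
  | 0, hpos => by simpa using hpos.le
  | B + 1, hpos => by
    have ih := natCast_div_le_inv_of_sq_le_mul_sub hD h B
      (hpos.trans_le (succ_le_of_sq_le_mul_sub hD (h B)))
    calc ((B + 1 : ℕ) : ℝ) / D = B / D + D⁻¹ := by push_cast; ring
      _ ≤ (a B)⁻¹ + D⁻¹ := by gcongr
      _ ≤ (a (B + 1))⁻¹ := inv_add_inv_le_inv_succ hD hpos (h B)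

lemma le_div_natCast_of_sq_le_mul_sub (hD : 0 ≤ D)
    (h : ∀ b, a b ^ 2 ≤ D * (a b - a (b + 1))) {B : ℕ} (hB : 0 < B) : a B ≤ D / B := by
  have hB' : (0 : ℝ) < B := Nat.cast_pos.2 hB
  rcases le_or_gt (a B) 0 with hneg | hpos
  · exact hneg.trans (by positivity)
  rcases hD.eq_or_lt with rfl | hD
  · nlinarith [h B]
  have hinv := natCast_div_le_inv_of_sq_le_mul_sub hD h B hpos
  rw [div_le_iff₀ hD, le_inv_mul_iff₀ hpos] at hinv
  rwa [le_div_iff₀ hB']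

end SquareDescent

theorem mcboost_sublinear_rate_general
    (Δ gs : ℕ → ℝ) (κ cL R : ℝ)
    (hκ : κ ∈ Set.Ioc (0 : ℝ) 1) (hcL : 0 < cL)
    (hnn : ∀ b, 0 ≤ Δ b)
    (hdesc : ∀ b, Δ b - Δ (b + 1) ≥ κ ^ 2 / (4 * cL) * (gs b) ^ 2)
    (hbd : ∀ b, Δ b ≤ R * gs b) :
    ∀ B : ℕ, 1 ≤ B → Δ B ≤ 4 * cL * R ^ 2 / (κ ^ 2 * B) := by
  have hκ0 : 0 < κ := hκ.1
  have hc : 0 < κ ^ 2 / (4 * cL) := by positivity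
  have hsq : ∀ b, Δ b ^ 2 ≤ R ^ 2 / (κ ^ 2 / (4 * cL)) * (Δ b - Δ (b + 1)) := fun b =>
    sq_le_div_mul_of_le_mul hc (hnn b) (hbd b) (hdesc b)
  intro B hB
  calc Δ B ≤ R ^ 2 / (κ ^ 2 / (4 * cL)) / B :=
        le_div_natCast_of_sq_le_mul_sub (by positivity) hsq hB
    _ = 4 * cL * R ^ 2 / (κ ^ 2 * B) := by field_simp

/-- Sublinear `O(1/B)` rate of MCBoost under smoothness: if
`Δ_b - Δ_{b+1} ≥ (κ²/(4c_L))‖g_b‖_*²` and `Δ_b ≤ R‖g_b‖_*`, with `Δ_b ≥ 0`,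
`κ ∈ (0,1]`, `c_L, R > 0`, then `Δ_B ≤ 4c_L R²/(κ² B)` for all `B ≥ 1`. -/
theorem mcboost_sublinear_rate
    (Δ gs : ℕ → ℝ) (κ cL R : ℝ)
    (hκ : κ ∈ Set.Ioc (0 : ℝ) 1) (hcL : 0 < cL) (hR : 0 < R)
    (hnn : ∀ b, 0 ≤ Δ b)
    (hdesc : ∀ b, Δ b - Δ (b + 1) ≥ κ ^ 2 / (4 * cL) * (gs b) ^ 2)
    (hbd : ∀ b, Δ b ≤ R * gs b) :
    ∀ B : ℕ, 1 ≤ B → Δ B ≤ 4 * cL * R ^ 2 / (κ ^ 2 * B) :=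
  mcboost_sublinear_rate_general Δ gs κ cL R hκ hcL hnn hdesc hbd
end

section
/- Under the covariate-shift setup, suppose E_T[s(Y, f̃(X))] = E_S[w(X)·s(Y, f̃(X))] where w is the density ratio, and the score decomposes as s = s₁ + s₂ with ‖E_S[s₁|X]‖_{L²} ≤ C̃, ‖E_S[s₂|X]‖_{L²} ≤ C̃, and f̃ is multicalibrated on source: |E_S[h(X)s(Y,f̃(X))]| < α for all h ∈ H_aud. Then for any h ∈ H_aud, any C > 0, and any weight function w̃: |E_T[s(Y,f̃(X))]| ≤ C̃(‖w - h/C‖_{L²} + ‖h/C - w̃‖_{L²}) + |E_S[(w̃ - w)s₂(Y)]| + α/C. -/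
/-!
Split `w` as `(w - h/C) + h/C`. Against `g₁ + g₂`, the `h/C` part is the multicalibration
integral scaled by `1/C`, hence at most `α/C`. Pairing `w - h/C` with `g₁` is bounded by
Cauchy–Schwarz. Pairing it with `g₂` is routed through the candidate weight `w̃` as
`(w - w̃) + (w̃ - h/C)`: the second piece is again bounded by Cauchy–Schwarz, and the first
is kept as the reweighting error.
-/

open MeasureTheory

noncomputable def l2norm {X : Type*} [MeasurableSpace X]
    (μ : Measure X) (f : X → ℝ) : ℝ :=
  Real.sqrt (∫ x, (f x) ^ 2 ∂μ)

section L2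

variable {X : Type*} [MeasurableSpace X] {μ : Measure X} {f g : X → ℝ}

lemma inner_toLp_eq_integral_mul (hf : MemLp f 2 μ) (hg : MemLp g 2 μ) :
    inner ℝ (hf.toLp f) (hg.toLp g) = ∫ x, f x * g x ∂μ := by
  rw [L2.inner_def]
  refine integral_congr_ae ?_
  filter_upwards [hf.coeFn_toLp, hg.coeFn_toLp] with x hfx hgx
  simp [hfx, hgx, mul_comm]

lemma l2norm_eq_norm_toLp (hf : MemLp f 2 μ) : l2norm μ f = ‖hf.toLp f‖ := by
  rw [l2norm, ← sq_eq_sq₀ (Real.sqrt_nonneg _) (norm_nonneg _),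
    Real.sq_sqrt (integral_nonneg fun x => sq_nonneg (f x)), ← real_inner_self_eq_norm_sq,
    inner_toLp_eq_integral_mul]
  simp only [sq]

lemma abs_integral_mul_le_l2norm_mul_l2norm (hf : MemLp f 2 μ) (hg : MemLp g 2 μ) :
    |∫ x, f x * g x ∂μ| ≤ l2norm μ f * l2norm μ g := by
  rw [← inner_toLp_eq_integral_mul hf hg, l2norm_eq_norm_toLp hf, l2norm_eq_norm_toLp hg]
  exact abs_real_inner_le_norm _ _

lemma abs_integral_mul_le_of_l2norm_le {c : ℝ} (hf : MemLp f 2 μ) (hg : MemLp g 2 μ)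
    (hgc : l2norm μ g ≤ c) : |∫ x, f x * g x ∂μ| ≤ c * l2norm μ f :=
  (abs_integral_mul_le_l2norm_mul_l2norm hf hg).trans <| by
    rw [mul_comm c]
    exact mul_le_mul_of_nonneg_left hgc (Real.sqrt_nonneg _)

lemma integral_mul_add_eq_split {w w' k g₁ g₂ : X → ℝ} (hw : MemLp w 2 μ)
    (hw' : MemLp w' 2 μ) (hk : MemLp k 2 μ) (hg₁ : MemLp g₁ 2 μ) (hg₂ : MemLp g₂ 2 μ) :
    ∫ x, w x * (g₁ x + g₂ x) ∂μ =
      ∫ x, (w x - k x) * g₁ x ∂μ - ∫ x, (k x - w' x) * g₂ x ∂μ -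
        ∫ x, (w' x - w x) * g₂ x ∂μ + ∫ x, k x * (g₁ x + g₂ x) ∂μ := by
  have hint {f g : X → ℝ} (hf : MemLp f 2 μ) (hg : MemLp g 2 μ) :
      Integrable (fun x => f x * g x) μ := hf.integrable_mul hg
  have h₁ := hint (f := fun x => w x - k x) (hw.sub hk) hg₁
  have h₂ := hint (f := fun x => k x - w' x) (hk.sub hw') hg₂
  have h₃ := hint (f := fun x => w' x - w x) (hw'.sub hw) hg₂
  have h₁₂ : Integrable (fun x => (w x - k x) * g₁ x - (k x - w' x) * g₂ x) μ :=
    h₁.sub h₂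
  have h₁₂₃ : Integrable (fun x => (w x - k x) * g₁ x - (k x - w' x) * g₂ x -
      (w' x - w x) * g₂ x) μ := h₁₂.sub h₃
  rw [← integral_sub h₁ h₂, ← integral_sub h₁₂ h₃,
    ← integral_add h₁₂₃ (hint hk (g := fun x => g₁ x + g₂ x) (hg₁.add hg₂))]
  congr 1 with x
  ring

end L2

theorem covariate_shift_universal_adaptability_general
    {X : Type*} [MeasurableSpace X] (μ : Measure X)
    (Haud : Set (X → ℝ)) (w wt g1 g2 : X → ℝ) (Ct α : ℝ)
    (hw : MemLp w 2 μ) (hwt : MemLp wt 2 μ)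
    (hg1 : MemLp g1 2 μ) (hg2 : MemLp g2 2 μ)
    (hH : ∀ h ∈ Haud, MemLp h 2 μ)
    (hg1bd : l2norm μ g1 ≤ Ct) (hg2bd : l2norm μ g2 ≤ Ct)
    (hmc : ∀ h ∈ Haud, |∫ x, h x * (g1 x + g2 x) ∂μ| < α) :
    ∀ h ∈ Haud, ∀ C : ℝ, 0 < C →
      |∫ x, w x * (g1 x + g2 x) ∂μ| ≤
        Ct * (l2norm μ (fun x => w x - h x / C) + l2norm μ (fun x => h x / C - wt x)) +
          |∫ x, (wt x - w x) * g2 x ∂μ| + α / C := by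
  intro h hh C hC
  have hhC : MemLp (fun x => h x / C) 2 μ := by
    simpa only [div_eq_mul_inv] using (hH h hh).mul_const C⁻¹
  have hcal : |∫ x, h x / C * (g1 x + g2 x) ∂μ| ≤ α / C := by
    simp_rw [div_mul_eq_mul_div, integral_div, abs_div, abs_of_pos hC]
    exact div_le_div_of_nonneg_right (hmc h hh).le hC.le
  have hv_bd := abs_integral_mul_le_of_l2norm_le (f := fun x => w x - h x / C)
    (hw.sub hhC) hg1 hg1bd
  have hu_bd := abs_integral_mul_le_of_l2norm_le (f := fun x => h x / C - wt x)
    (hhC.sub hwt) hg2 hg2bd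
  rw [integral_mul_add_eq_split hw hwt hhC hg1 hg2]
  refine (abs_add_le _ _).trans ?_
  linarith [abs_sub (∫ x, (w x - h x / C) * g1 x ∂μ - ∫ x, (h x / C - wt x) * g2 x ∂μ)
    (∫ x, (wt x - w x) * g2 x ∂μ),
    abs_sub (∫ x, (w x - h x / C) * g1 x ∂μ) (∫ x, (h x / C - wt x) * g2 x ∂μ)]

/-- Target-independent learning under covariate shift: if the target mean score equals
`E_S[w·(g₁+g₂)]` (with `w` the density ratio and `g₁, g₂` the conditional means of the
score components, each with `L²` norm at most `C̃`), and `f̃` is `(H_aud, α)`-multicalibrated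
on the source, then for every `h ∈ H_aud`, every `C > 0`, and every candidate weight `w̃`:
`|E_T[s]| ≤ C̃(‖w - h/C‖ + ‖h/C - w̃‖) + |E_S[(w̃-w)g₂]| + α/C`. -/
theorem covariate_shift_universal_adaptability
    {X : Type*} [MeasurableSpace X] (μ : Measure X) [IsProbabilityMeasure μ]
    (Haud : Set (X → ℝ)) (w wt g1 g2 : X → ℝ) (Ct α : ℝ)
    (hCt : 0 ≤ Ct) (hα : 0 < α)
    (hw : MemLp w 2 μ) (hwt : MemLp wt 2 μ)
    (hg1 : MemLp g1 2 μ) (hg2 : MemLp g2 2 μ)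
    (hH : ∀ h ∈ Haud, MemLp h 2 μ)
    (hg1bd : l2norm μ g1 ≤ Ct) (hg2bd : l2norm μ g2 ≤ Ct)
    (hmc : ∀ h ∈ Haud, |∫ x, h x * (g1 x + g2 x) ∂μ| < α) :
    ∀ h ∈ Haud, ∀ C : ℝ, 0 < C →
      |∫ x, w x * (g1 x + g2 x) ∂μ| ≤
        Ct * (l2norm μ (fun x => w x - h x / C) + l2norm μ (fun x => h x / C - wt x)) +
          |∫ x, (wt x - w x) * g2 x ∂μ| + α / C :=
  covariate_shift_universal_adaptability_general μ Haud w wt g1 g2 Ct α hw hwt hg1 hg2 hH hg1bd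
    hg2bd hmc
end
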